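/- Let K be a field with a henselian discrete valuation w whose residue field κ has characteristic ≠ 2, and let ℓ ≥ 1. If either s(κ) ≤ 2^{ℓ-1}, or κ is real with Pythagoras number p(κ) ≤ 2^ℓ, then ρ_ℓ(K) = 0, i.e., every nonzero sum of 2^{ℓ+1} squares in K is a sum of 2^ℓ squares. -/

import Mathlib

/-!
If `-1` is a sum of `2 ^ (ℓ - 1)` squares in `κ`, Hensel's lemma lifts this to `K`, and then
every `x = ((x + 1) / 2) ^ 2 - ((x - 1) / 2) ^ 2` is a sum of `2 ^ (ℓ - 1) + 1 ≤ 2 ^ ℓ` squares.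

If `κ` is real, divide a nonzero sum `∑ fᵢ ^ 2` by the square of a term `f_{i₀}` of least
valuation. The quotient lies in `O`, and its residue is `1 + ∑_{i ≠ i₀} (fᵢ / f_{i₀}) ^ 2`, which is
nonzero because `κ` is real, hence a sum of `2 ^ ℓ` squares in `κ`. Such a residue lifts to a sum
of `2 ^ ℓ` squares in `O`, since a unit of `O` congruent to `1` is a square by Hensel's lemma.
-/

/-- The set of elements of `K` that are sums of `m` squares. -/
def sosN (K : Type*) [Field K] (m : ℕ) : Set K :=
  {x | ∃ f : Fin m → K, x = ∑ i, f i ^ 2}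

open IsLocalRing Polynomial

section SumsOfSquares

variable {K : Type*} [Field K]

lemma sosN_mono {m n : ℕ} (h : m ≤ n) : sosN K m ⊆ sosN K n := by
  obtain ⟨k, rfl⟩ := Nat.exists_eq_add_of_le h
  rintro x ⟨f, rfl⟩
  refine ⟨Fin.append f 0, ?_⟩
  simp [Fin.sum_univ_add]

lemma sq_mul_mem_sosN {m : ℕ} (c : K) {x : K} (hx : x ∈ sosN K m) : c ^ 2 * x ∈ sosN K m := by
  obtain ⟨f, rfl⟩ := hx
  exact ⟨fun i => c * f i, by simp only [Finset.mul_sum, mul_pow]⟩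

lemma map_sum_sq_mem_sosN {R : Type*} [CommRing R] (φ : R →+* K) {m : ℕ} (b : Fin m → R) :
    φ (∑ i, b i ^ 2) ∈ sosN K m :=
  ⟨φ ∘ b, by simp⟩

lemma mem_sosN_succ_of_neg_one_mem {n : ℕ} (h2 : (2 : K) ≠ 0) (h : (-1 : K) ∈ sosN K n)
    (x : K) : x ∈ sosN K (n + 1) := by
  obtain ⟨f, hf⟩ := sq_mul_mem_sosN ((x - 1) / 2) h
  refine ⟨Fin.cons ((x + 1) / 2) f, ?_⟩
  rw [Fin.sum_univ_succ, Fin.cons_zero]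
  simp only [Fin.cons_succ, ← hf]
  field_simp
  ring

lemma sum_sq_ne_zero_of_neg_one_notMem {n : ℕ} (hreal : (-1 : K) ∉ sosN K n)
    {g : Fin n → K} {i : Fin n} (hg : g i = 1) : ∑ j, g j ^ 2 ≠ 0 := by
  classical
  intro h0
  refine hreal ⟨Function.update g i 0, ?_⟩
  have hupd : ∀ j, Function.update g i 0 j ^ 2 = Function.update (fun j => g j ^ 2) i 0 j :=
    fun j => by by_cases hj : j = i <;> simp [hj]
  rw [Finset.sum_eq_add_sum_sdiff_singleton_of_mem (Finset.mem_univ i), hg] at h0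
  rw [Finset.sum_congr rfl fun j _ => hupd j, Finset.sum_update_of_mem (Finset.mem_univ i)]
  linear_combination -h0

end SumsOfSquares

section Henselian

variable {O : Type*} [CommRing O] [HenselianLocalRing O]

lemma isSquare_of_residue_eq_one (h2 : IsUnit (2 : O)) {v : O} (hv : residue O v = 1) :
    IsSquare v := by
  obtain ⟨a, ha, -⟩ := HenselianLocalRing.is_henselian (X ^ 2 - C v)
    (monic_X_pow_sub_C v two_ne_zero) 1
    ((residue_eq_zero_iff _).mp (by simp [hv])) (by simpa [one_add_one_eq_two] using h2)
  refine ⟨a, ?_⟩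
  simpa [sub_eq_zero, sq, eq_comm] using ha

lemma exists_sum_sq_eq_of_residue_mem_sosN (h2 : IsUnit (2 : O)) {m : ℕ} {u : O}
    (hu : residue O u ≠ 0) (hres : residue O u ∈ sosN (ResidueField O) m) :
    ∃ b : Fin m → O, u = ∑ i, b i ^ 2 := by
  obtain ⟨c, hc⟩ := hres
  choose d hd using fun i => residue_surjective (c i)
  set e : O := ∑ i, d i ^ 2
  have hre : residue O e = residue O u := by simp [e, hc, hd]
  obtain ⟨E, hE⟩ : IsUnit e := (residue_ne_zero_iff_isUnit e).mp (hre ▸ hu)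
  obtain ⟨a, ha⟩ : IsSquare (↑E⁻¹ * u) := by
    refine isSquare_of_residue_eq_one h2 ?_
    rw [map_mul, ← hre, ← hE, ← map_mul, Units.inv_mul, map_one]
  refine ⟨fun i => d i * a, ?_⟩
  calc u = E * (↑E⁻¹ * u) := by rw [← mul_assoc, Units.mul_inv, one_mul]
    _ = ∑ i, (d i * a) ^ 2 := by
      rw [ha, hE, Finset.sum_mul]
      exact Finset.sum_congr rfl fun i _ => by ring

lemma mem_sosN_succ_of_residue_neg_one_mem {K : Type*} [Field K] [Algebra O K]
    (h2 : IsUnit (2 : O)) {n : ℕ} (h : (-1 : ResidueField O) ∈ sosN (ResidueField O) n) (x : K) :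
    x ∈ sosN K (n + 1) := by
  obtain ⟨b, hb⟩ := exists_sum_sq_eq_of_residue_mem_sosN h2 (u := -1) (by simp) (by simpa using h)
  refine mem_sosN_succ_of_neg_one_mem ?_ ?_ x
  · rw [← map_ofNat (algebraMap O K)]
    exact (h2.map _).ne_zero
  · simpa [← hb] using map_sum_sq_mem_sosN (algebraMap O K) b

end Henselian

lemma ValuationRing.exists_forall_div_mem_range {O K : Type*} [CommRing O] [IsDomain O]
    [ValuationRing O] [Field K] [Algebra O K] [IsFractionRing O K] {ι : Type*} [Fintype ι]
    {f : ι → K} (hf : f ≠ 0) :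
    ∃ i₀, f i₀ ≠ 0 ∧ ∀ j, ∃ a : O, algebraMap O K a = f j / f i₀ := by
  let v := ValuationRing.valuation O K
  obtain ⟨i, hi⟩ := Function.ne_iff.mp hf
  obtain ⟨i₀, -, hmax⟩ := Finset.exists_max_image Finset.univ (fun j => v (f j)) ⟨i, by simp⟩
  have hi₀ : f i₀ ≠ 0 := by
    intro h0
    have := hmax i (Finset.mem_univ i)
    simp_all [v]
  refine ⟨i₀, hi₀, fun j => (ValuationRing.mem_integer_iff O K _).mp ?_⟩
  rw [Valuation.mem_integer_iff, map_div₀]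
  exact div_le_one_of_le₀ (hmax j (Finset.mem_univ j)) zero_le

section RealResidueField

variable {O K : Type*} [CommRing O] [IsDomain O] [ValuationRing O] [HenselianLocalRing O]
  [Field K] [Algebra O K] [IsFractionRing O K]

lemma mem_sosN_of_residueField_sosN_subset (h2 : IsUnit (2 : O)) {n p : ℕ}
    (hreal : (-1 : ResidueField O) ∉ sosN (ResidueField O) n)
    (hpyth : sosN (ResidueField O) n ⊆ sosN (ResidueField O) p)
    {x : K} (hx0 : x ≠ 0) (hx : x ∈ sosN K n) : x ∈ sosN K p := by
  obtain ⟨f, rfl⟩ := hx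
  have hf : f ≠ 0 := by
    rintro rfl
    simp at hx0
  obtain ⟨i₀, hi₀, hint⟩ := ValuationRing.exists_forall_div_mem_range (O := O) hf
  choose a ha using hint
  have ha₀ : a i₀ = 1 := IsFractionRing.injective O K (by rw [ha, div_self hi₀, map_one])
  have hres : residue O (∑ j, a j ^ 2) = ∑ j, residue O (a j) ^ 2 := by simp
  obtain ⟨b, hb⟩ := exists_sum_sq_eq_of_residue_mem_sosN h2
    (hres ▸ sum_sq_ne_zero_of_neg_one_notMem hreal (by rw [ha₀, map_one]))
    (hpyth ⟨_, hres⟩)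
  have hx : ∑ j, f j ^ 2 = f i₀ ^ 2 * algebraMap O K (∑ j, a j ^ 2) := by
    simp only [map_sum, map_pow, ha, div_pow, ← Finset.sum_div]
    field_simp
  rw [hx, hb]
  exact sq_mul_mem_sosN _ (map_sum_sq_mem_sosN _ b)

end RealResidueField

/-- let `K` be a field with a henselian discrete valuation whose valuation
ring is `O` and whose residue field `κ` has characteristic `≠ 2`, and let `ℓ ≥ 1`.
If either the level `s(κ) ≤ 2^(ℓ-1)` (i.e. `-1` is a sum of `2^(ℓ-1)` squares in `κ`),
or `κ` is real with Pythagoras number `p(κ) ≤ 2^ℓ` (i.e. every sum of squares in `κ` is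
a sum of `2^ℓ` squares), then every nonzero sum of `2^(ℓ+1)` squares in `K` is a sum of
`2^ℓ` squares, i.e. `ρ_ℓ(K) = 0`. -/
theorem stmt9 {K O : Type*} [Field K] [CommRing O] [IsDomain O]
    [IsDiscreteValuationRing O] [HenselianLocalRing O]
    [Algebra O K] [IsFractionRing O K] (ℓ : ℕ) (hℓ : 1 ≤ ℓ)
    (hchar : (2 : IsLocalRing.ResidueField O) ≠ 0)
    (h : ((-1 : IsLocalRing.ResidueField O) ∈
            sosN (IsLocalRing.ResidueField O) (2 ^ (ℓ - 1))) ∨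
      ((∀ m, (-1 : IsLocalRing.ResidueField O) ∉ sosN (IsLocalRing.ResidueField O) m) ∧
        ∀ x : IsLocalRing.ResidueField O,
          (∃ n, x ∈ sosN (IsLocalRing.ResidueField O) n) →
            x ∈ sosN (IsLocalRing.ResidueField O) (2 ^ ℓ))) :
    ∀ x : K, x ≠ 0 → x ∈ sosN K (2 ^ (ℓ + 1)) → x ∈ sosN K (2 ^ ℓ) := by
  have h2 : IsUnit (2 : O) := (residue_ne_zero_iff_isUnit 2).mp (by rwa [map_ofNat])
  intro x hx0 hx
  rcases h with hlevel | ⟨hreal, hpyth⟩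
  · have hle : 2 ^ (ℓ - 1) + 1 ≤ 2 ^ ℓ := by
      obtain ⟨k, rfl⟩ : ∃ k, ℓ = k + 1 := ⟨ℓ - 1, by omega⟩
      simp only [Nat.add_sub_cancel, pow_succ]
      have := Nat.one_le_two_pow (n := k)
      omega
    exact sosN_mono hle (mem_sosN_succ_of_residue_neg_one_mem h2 hlevel x)
  · exact mem_sosN_of_residueField_sosN_subset h2 (hreal _) (fun y hy => hpyth y ⟨_, hy⟩) hx0 hx
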